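/- arXiv:1305.2516 — 2 statements merged into one kernel-verified Lean document; each statement's English description precedes it below -/
import Mathlib

section
/- Dense counting lemma: For every graph H with vertex set {1,2,…,k} and every δ > 0, there exist ε > 0 and an integer n₀ such that the following holds. Let n ≥ n₀ and let G be a graph whose vertex set is a disjoint union V₁ ∪ … ∪ V_k of sets of size n. Assume that for each ij ∈ E(H), the bipartite subgraph of G induced between V_i and V_j is ε-regular and has density d_{ij}. Then the number of k-tuples (v₁,…,v_k) ∈ V₁ × … × V_k such that v_i v_j ∈ E(G) whenever ij ∈ E(H) is n^k (∏_{ij∈E(H)} d_{ij} ± δ), i.e., it differs from n^k ∏_{ij∈E(H)} d_{ij} by at most δ n^k. -/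
open Finset Filter
open scoped Classical

/-- Number of ordered pairs `(x, y) ∈ X × Y` with `x` adjacent to `y` in `G`. -/
noncomputable def edgesBetween {V : Type} (G : SimpleGraph V) (X Y : Finset V) : ℕ :=
  ((X ×ˢ Y).filter fun pq => G.Adj pq.1 pq.2).card

/-- Edge density between `X` and `Y`. -/
noncomputable def density {V : Type} (G : SimpleGraph V) (X Y : Finset V) : ℝ :=
  (edgesBetween G X Y : ℝ) / ((X.card : ℝ) * (Y.card : ℝ))

/-- The pair `(A, B)` is `(ε, p)`-regular in `G`. -/
def IsRegularPair {V : Type} (G : SimpleGraph V) (A B : Finset V) (ε p : ℝ) : Prop :=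
  ∀ A' ⊆ A, ∀ B' ⊆ B, ε * A.card ≤ A'.card → ε * B.card ≤ B'.card →
    |density G A' B' - density G A B| ≤ ε * p

/-- The pair `(A, B)` is `(ε, d)`-lower-regular in `G`. -/
def IsLowerRegularPair {V : Type} (G : SimpleGraph V) (A B : Finset V) (ε d : ℝ) : Prop :=
  ∀ A' ⊆ A, ∀ B' ⊆ B, ε * A.card ≤ A'.card → ε * B.card ≤ B'.card →
    d ≤ density G A' B'

/-- Number of edges of `H` with both endpoints in `S`. -/
noncomputable def edgesWithin {V : Type} (H : SimpleGraph V) (S : Finset V) : ℕ :=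
  {e ∈ H.edgeSet | ∀ v ∈ e, v ∈ S}.ncard

/-- Number of edges of `H`. -/
noncomputable def edgeCount {V : Type} (H : SimpleGraph V) : ℕ := H.edgeSet.ncard

/-- The 2-density `m₂(H)`. -/
noncomputable def twoDensity {k : ℕ} (H : SimpleGraph (Fin k)) : ℝ :=
  max (1/2) (sSup {x : ℝ | ∃ S : Finset (Fin k), 3 ≤ S.card ∧
    x = ((edgesWithin H S : ℝ) - 1) / ((S.card : ℝ) - 2)})

/-- `H` is strictly balanced: every proper subgraph has strictly smaller 2-density. -/
def StrictlyBalanced {k : ℕ} (H : SimpleGraph (Fin k)) : Prop :=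
  ∀ H' : SimpleGraph (Fin k), H' ≤ H → H' ≠ H → twoDensity H' < twoDensity H

/-- `G` contains a copy of `H`. -/
def ContainsCopy {V W : Type} (H : SimpleGraph V) (G : SimpleGraph W) : Prop :=
  ∃ f : V → W, Function.Injective f ∧ ∀ a b, H.Adj a b → G.Adj (f a) (f b)

/-- Number of canonical copies of `H` in `G` w.r.t. the parts `P`. -/
noncomputable def canonicalCount {k : ℕ} {W : Type} (H : SimpleGraph (Fin k))
    (G : SimpleGraph W) (P : Fin k → Finset W) : ℕ :=
  {f : Fin k → W | (∀ i, f i ∈ P i) ∧ ∀ i j, H.Adj i j → G.Adj (f i) (f j)}.ncard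

/-- Probability that `G_{n,p}` satisfies the predicate `P`. -/
noncomputable def gnpProb (n : ℕ) (p : ℝ) (P : SimpleGraph (Fin n) → Prop) : ℝ :=
  ∑ G ∈ Finset.univ.filter P, p ^ edgeCount G * (1 - p) ^ (n.choose 2 - edgeCount G)

/-- Probability that the `p`-random subgraph `G_p` of `G` satisfies the predicate `P`. -/
noncomputable def subgraphProb {V : Type} [Fintype V] [DecidableEq V] (G : SimpleGraph V)
    (p : ℝ) (P : SimpleGraph V → Prop) : ℝ :=
  ∑ G' ∈ Finset.univ.filter (fun G' => G' ≤ G ∧ P G'),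
    p ^ edgeCount G' * (1 - p) ^ (edgeCount G - edgeCount G')

/-- The chromatic number of `H`, as a natural number. -/
noncomputable def chrom {k : ℕ} (H : SimpleGraph (Fin k)) : ℕ := H.chromaticNumber.toNat

/-- The edges of `H`, each represented once as an ordered pair `(i, j)` with `i < j`. -/
noncomputable def hPairs {k : ℕ} (H : SimpleGraph (Fin k)) : Finset (Fin k × Fin k) :=
  Finset.univ.filter fun ij => H.Adj ij.1 ij.2 ∧ ij.1 < ij.2

/-- Membership in `𝒢(H, n, m, p, ε)` (with parts `P`, inside ambient vertex type). -/
def InG {k N : ℕ} (H : SimpleGraph (Fin k)) (G : SimpleGraph (Fin N))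
    (P : Fin k → Finset (Fin N)) (n m : ℕ) (p ε : ℝ) : Prop :=
  (∀ i j, i ≠ j → Disjoint (P i) (P j)) ∧
  (∀ i, (P i).card = n) ∧
  (∀ u v, G.Adj u v → ∃ i j, H.Adj i j ∧ u ∈ P i ∧ v ∈ P j) ∧
  (∀ i j, H.Adj i j → IsRegularPair G (P i) (P j) ε p) ∧
  (∀ i j, H.Adj i j → edgesBetween G (P i) (P j) = m)

/-- Membership in `𝒢_ℓ(H, n, d, ε)` (lower-regular pairs, parts `P` covering the vertex set). -/
def InGl {k : ℕ} {W : Type} (H : SimpleGraph (Fin k)) (G : SimpleGraph W)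
    (P : Fin k → Finset W) (n : ℕ) (d ε : ℝ) : Prop :=
  (∀ i j, i ≠ j → Disjoint (P i) (P j)) ∧
  (∀ i, (P i).card = n) ∧
  (∀ v, ∃ i, v ∈ P i) ∧
  (∀ u v, G.Adj u v → ∃ i j, H.Adj i j ∧ u ∈ P i ∧ v ∈ P j) ∧
  (∀ i j, H.Adj i j → IsLowerRegularPair G (P i) (P j) ε d)

/-- `|𝒞(H,G;H',G')|`: canonical copies of `H` in `G` whose `H'`-edges lie in `G'`. -/
noncomputable def restrictedCount {k : ℕ} {W : Type} (H : SimpleGraph (Fin k))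
    (G : SimpleGraph W) (H' : SimpleGraph (Fin k)) (G' : SimpleGraph W)
    (P : Fin k → Finset W) : ℕ :=
  {f : Fin k → W | (∀ i, f i ∈ P i) ∧ (∀ i j, H.Adj i j → G.Adj (f i) (f j)) ∧
    (∀ i j, H'.Adj i j → G'.Adj (f i) (f j))}.ncard

/-- Number of copies of `H` in `G`, i.e. subgraphs of `G` isomorphic to `H`. -/
noncomputable def copyCount {k : ℕ} {W : Type} (H : SimpleGraph (Fin k))
    (G : SimpleGraph W) : ℕ :=
  {G' : G.Subgraph | Nonempty (G'.coe ≃g H)}.ncard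

/-- Number of `k`-cliques of `G`. -/
noncomputable def cliqueCount {V : Type} (k : ℕ) (G : SimpleGraph V) : ℕ :=
  {s : Finset V | G.IsNClique k s}.ncard

/-- `g_k(ρ, n)`: minimum number of `K_k`s in an `n`-vertex graph with at least `ρ·C(n,2)` edges. -/
noncomputable def gkn (k n : ℕ) (ρ : ℝ) : ℕ :=
  sInf {m : ℕ | ∃ G : SimpleGraph (Fin n),
    ρ * (n.choose 2 : ℝ) ≤ (edgeCount G : ℝ) ∧ cliqueCount k G = m}

/-- The clique density function `g_k(ρ) = lim_{n → ∞} g_k(ρ, n)/C(n,k)`. -/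
noncomputable def gk (k : ℕ) (ρ : ℝ) : ℝ :=
  limUnder atTop (fun n => (gkn k n ρ : ℝ) / (n.choose k : ℝ))

/-- `G` is `(η, p, D)`-upper-uniform. -/
def UpperUniform {V : Type} [Fintype V] (G : SimpleGraph V) (η p D : ℝ) : Prop :=
  ∀ U₁ U₂ : Finset V, Disjoint U₁ U₂ →
    η * (Fintype.card V : ℝ) ≤ U₁.card → η * (Fintype.card V : ℝ) ≤ U₂.card →
    density G U₁ U₂ ≤ D * p

/-- `G` is `(η, p, D)`-upper-uniform, also for edges inside a single set. -/
def UpperUniform' {V : Type} [Fintype V] (G : SimpleGraph V) (η p D : ℝ) : Prop :=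
  UpperUniform G η p D ∧
  ∀ U : Finset V, η * (Fintype.card V : ℝ) ≤ U.card →
    (edgesWithin G U : ℝ) ≤ D * p * (U.card.choose 2 : ℝ)

/-- `H` is a star forest. -/
def IsStarForest {V : Type} (H : SimpleGraph V) : Prop :=
  ∃ c : V → V, ∀ u v, H.Adj u v → c u = c v ∧ (c u = u ∨ c u = v)

/-- `G` is `(H, r)`-Ramsey. -/
def IsRamsey {k n : ℕ} (H : SimpleGraph (Fin k)) (r : ℕ) (G : SimpleGraph (Fin n)) : Prop :=
  ∀ col : Sym2 (Fin n) → Fin r, ∃ c : Fin r, ∃ f : Fin k → Fin n, Function.Injective f ∧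
    ∀ a b, H.Adj a b → G.Adj (f a) (f b) ∧ col s(f a, f b) = c

/-- `G` is `(H, ε)`-Turán. -/
def IsTuran {k n : ℕ} (H : SimpleGraph (Fin k)) (ε : ℝ) (G : SimpleGraph (Fin n)) : Prop :=
  ∀ G' : SimpleGraph (Fin n), G' ≤ G →
    (1 - 1 / ((chrom H : ℝ) - 1) + ε) * (edgeCount G : ℝ) ≤ (edgeCount G' : ℝ) →
    ContainsCopy H G'

/-- The normalized homomorphism count `μ_H(G)`. -/
noncomputable def muH {k N : ℕ} (H : SimpleGraph (Fin k)) (G : SimpleGraph (Fin N)) : ℝ :=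
  (∑ f : Fin k → Fin N, ∏ ij ∈ hPairs H, (if G.Adj (f ij.1) (f ij.2) then (1:ℝ) else 0))
    / (N : ℝ) ^ k

/-- Membership in `H*(V₁, …, V_k)`: all edges lie between pairs `Vᵢ, Vⱼ` with `ij ∈ E(H)`. -/
def InHstar {k N : ℕ} (H : SimpleGraph (Fin k)) (G : SimpleGraph (Fin N))
    (P : Fin k → Finset (Fin N)) : Prop :=
  ∀ u v, G.Adj u v → ∃ i j, H.Adj i j ∧ u ∈ P i ∧ v ∈ P j

/-- The normalized canonical homomorphism count `μ*_H(G)`. -/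
noncomputable def muHstar {k N : ℕ} (H : SimpleGraph (Fin k)) (G : SimpleGraph (Fin N))
    (P : Fin k → Finset (Fin N)) : ℝ :=
  (∑ f ∈ Finset.univ.filter (fun f : Fin k → Fin N => ∀ i, f i ∈ P i),
    ∏ ij ∈ hPairs H, (if G.Adj (f ij.1) (f ij.2) then (1:ℝ) else 0)) / (N : ℝ) ^ k

/-!
Count canonical copies as the sum, over `f ∈ ∏ i, P i`, of the product of the edge indicators
`𝟙[f i ~ f j]` for `ij ∈ E(H)`, and add the edges of `H` one at a time. Adding the edge `ab`
changes the count, relative to `d_ab` times the previous count, by the sum of `𝟙[f a ~ f b] - d_ab`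
over the maps admissible for the earlier edges. Once all coordinates other than `a` and `b` are
fixed, the admissible values of `(f a, f b)` form a rectangle `A' × B' ⊆ P a × P b`, because no
earlier edge joins `a` and `b`; so `ε`-regularity bounds the contribution of each such fibre by
`ε |P a| |P b|` (trivially when `A'` or `B'` is too small to apply regularity to). Summing over the
fibres and telescoping gives an error of at most `e(H) ε n^k`.
-/

section Density

variable {V : Type} (G : SimpleGraph V)

theorem edgesBetween_le_card_mul_card (X Y : Finset V) : edgesBetween G X Y ≤ #X * #Y :=
  (card_filter_le _ _).trans_eq (card_product X Y)

theorem density_nonneg (X Y : Finset V) : 0 ≤ density G X Y := by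
  unfold density; positivity

theorem density_le_one (X Y : Finset V) : density G X Y ≤ 1 :=
  div_le_one_of_le₀ (by exact_mod_cast edgesBetween_le_card_mul_card G X Y) (by positivity)

theorem edgesBetween_eq_density_mul (X Y : Finset V) :
    (edgesBetween G X Y : ℝ) = density G X Y * (#X * #Y) := by
  rcases eq_or_ne ((#X : ℝ) * #Y) 0 with h | h
  · have : (edgesBetween G X Y : ℝ) ≤ #X * #Y := by
      exact_mod_cast edgesBetween_le_card_mul_card G X Y
    rw [h, mul_zero]
    exact le_antisymm (h ▸ this) (Nat.cast_nonneg _)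
  · rw [density, div_mul_cancel₀ _ h]

variable {G}

theorem IsRegularPair.abs_edgesBetween_sub_le {A B A' B' : Finset V} {ε : ℝ}
    (hreg : IsRegularPair G A B ε 1) (hA : A' ⊆ A) (hB : B' ⊆ B) :
    |(edgesBetween G A' B' : ℝ) - density G A B * #A' * #B'| ≤ ε * #A * #B := by
  have hd₀ := density_nonneg G A B
  have hd₁ := density_le_one G A B
  have hA' : (#A' : ℝ) ≤ #A := by exact_mod_cast card_le_card hA
  have hB' : (#B' : ℝ) ≤ #B := by exact_mod_cast card_le_card hB
  have he : (edgesBetween G A' B' : ℝ) ≤ #A' * #B' := by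
    exact_mod_cast edgesBetween_le_card_mul_card G A' B'
  by_cases hlarge : ε * #A ≤ #A' ∧ ε * #B ≤ #B'
  · have hdev := hreg A' hA B' hB hlarge.1 hlarge.2
    rw [mul_one] at hdev
    have hε : 0 ≤ ε := (abs_nonneg _).trans hdev
    calc |(edgesBetween G A' B' : ℝ) - density G A B * #A' * #B'|
        = |density G A' B' - density G A B| * (#A' * #B') := by
          rw [edgesBetween_eq_density_mul, mul_assoc, ← sub_mul, abs_mul,
            abs_of_nonneg (by positivity : (0 : ℝ) ≤ #A' * #B')]
      _ ≤ ε * (#A * #B) := by gcongr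
      _ = ε * #A * #B := by ring
  · have hsmall : (#A' : ℝ) * #B' ≤ ε * #A * #B := by
      rw [not_and_or, not_le, not_le] at hlarge
      rcases hlarge with h | h <;>
        nlinarith [Nat.cast_nonneg (α := ℝ) #A', Nat.cast_nonneg (α := ℝ) #B']
    rw [abs_sub_le_iff]
    constructor <;> nlinarith [Nat.cast_nonneg (α := ℝ) (edgesBetween G A' B')]

theorem IsRegularPair.abs_sum_sub_density_le {A B : Finset V} {ε : ℝ}
    (hreg : IsRegularPair G A B ε 1) {R : Finset (V × V)} (hR : R ⊆ A ×ˢ B)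
    (hrect : ∀ p ∈ R, ∀ q ∈ R, (p.1, q.2) ∈ R) :
    |∑ p ∈ R, ((if G.Adj p.1 p.2 then 1 else 0) - density G A B)| ≤ ε * #A * #B := by
  have hR_eq : R = R.image Prod.fst ×ˢ R.image Prod.snd := by
    ext ⟨x, y⟩
    simp only [mem_product, mem_image]
    refine ⟨fun h => ⟨⟨_, h, rfl⟩, ⟨_, h, rfl⟩⟩, ?_⟩
    rintro ⟨⟨p, hp, rfl⟩, ⟨q, hq, rfl⟩⟩
    exact hrect p hp q hq
  have hfst : R.image Prod.fst ⊆ A := fun x hx => by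
    obtain ⟨p, hp, rfl⟩ := mem_image.1 hx
    exact (mem_product.1 (hR hp)).1
  have hsnd : R.image Prod.snd ⊆ B := fun y hy => by
    obtain ⟨p, hp, rfl⟩ := mem_image.1 hy
    exact (mem_product.1 (hR hp)).2
  convert hreg.abs_edgesBetween_sub_le hfst hsnd using 2
  rw [sum_sub_distrib, sum_boole, sum_const, nsmul_eq_mul, edgesBetween]
  nth_rewrite 1 2 [hR_eq]
  rw [card_product]
  push_cast
  ring

end Density

theorem abs_sum_le_of_forall_abs_sum_fiber_le {α β : Type*} [DecidableEq β] (s : Finset α)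
    (κ : α → β) (Φ : α → ℝ) (c : ℝ)
    (h : ∀ g ∈ s, |∑ f ∈ s with κ f = κ g, Φ f| ≤ c * #{f ∈ s | κ f = κ g}) :
    |∑ f ∈ s, Φ f| ≤ c * #s := by
  have hmaps : ∀ f ∈ s, κ f ∈ s.image κ := fun f hf => mem_image_of_mem κ hf
  rw [← sum_fiberwise_of_maps_to hmaps, card_eq_sum_card_fiberwise hmaps, Nat.cast_sum, mul_sum]
  refine (abs_sum_le_sum_abs _ _).trans (sum_le_sum fun y hy => ?_)
  obtain ⟨g, hg, rfl⟩ := mem_image.1 hy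
  exact h g hg

section PartiteMaps

variable {ι V : Type} [DecidableEq ι] {a b : ι}

theorem eq_of_eqOn_compl_pair {f f' : ι → V} (h : Set.EqOn f f' {a, b}ᶜ)
    (ha : f a = f' a) (hb : f b = f' b) : f = f' := by
  funext c
  by_cases hc : c = a ∨ c = b
  · rcases hc with rfl | rfl <;> assumption
  · exact h (by simpa using hc)

theorem forall_adj_update_of_eqOn_compl_pair {G : SimpleGraph V} {S : Finset (ι × ι)}
    (hS : ∀ s ∈ S, s(s.1, s.2) ≠ s(a, b)) {f f' : ι → V} (h : Set.EqOn f f' {a, b}ᶜ)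
    (hf : ∀ s ∈ S, G.Adj (f s.1) (f s.2)) (hf' : ∀ s ∈ S, G.Adj (f' s.1) (f' s.2)) :
    ∀ s ∈ S, G.Adj (Function.update f b (f' b) s.1) (Function.update f b (f' b) s.2) := by
  have h_f : ∀ c, c ≠ b → Function.update f b (f' b) c = f c := fun c hc =>
    Function.update_of_ne hc _ _
  have h_f' : ∀ c, c = b ∨ c ≠ a → Function.update f b (f' b) c = f' c := by
    intro c hc
    by_cases hcb : c = b
    · subst hcb; exact Function.update_self ..
    · rw [Function.update_of_ne hcb]
      exact h (by simp [hcb, hc.resolve_left hcb])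
  intro s hs
  by_cases hsb : s.1 ≠ b ∧ s.2 ≠ b
  · rw [h_f _ hsb.1, h_f _ hsb.2]
    exact hf s hs
  · have hsab := hS s hs
    rw [Ne, Sym2.eq_iff] at hsab
    rw [h_f' s.1 (by tauto), h_f' s.2 (by tauto)]
    exact hf' s hs

variable [Fintype ι] {P : ι → Finset V} {g : ι → V}

noncomputable def pairFiber (P : ι → Finset V) (a b : ι) (g : ι → V) : Finset (ι → V) :=
  {f ∈ Fintype.piFinset P | ({a, b}ᶜ : Set ι).domRestrict f = ({a, b}ᶜ : Set ι).domRestrict g}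

theorem mem_pairFiber {f : ι → V} :
    f ∈ pairFiber P a b g ↔ (∀ i, f i ∈ P i) ∧ Set.EqOn f g {a, b}ᶜ := by
  rw [pairFiber, mem_filter, Fintype.mem_piFinset, Set.domRestrict_eq_domRestrict_iff]

theorem update_mem_pairFiber {f : ι → V} (hf : f ∈ pairFiber P a b g) {c : ι} (hc : c = a ∨ c = b)
    {x : V} (hx : x ∈ P c) : Function.update f c x ∈ pairFiber P a b g := by
  rw [mem_pairFiber] at hf ⊢
  refine ⟨fun i => ?_, fun i hi => ?_⟩
  · rcases eq_or_ne i c with rfl | hic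
    · rwa [Function.update_self]
    · rw [Function.update_of_ne hic]
      exact hf.1 i
  · have hic : i ≠ c := by rintro rfl; simp_all
    rw [Function.update_of_ne hic]
    exact hf.2 hi

theorem injOn_pairFiber :
    Set.InjOn (fun f : ι → V => (f a, f b)) (pairFiber P a b g : Set (ι → V)) :=
  fun _ hf _ hf' h =>
    eq_of_eqOn_compl_pair ((mem_pairFiber.1 hf).2.trans (mem_pairFiber.1 hf').2.symm)
      (congrArg Prod.fst h) (congrArg Prod.snd h)

theorem image_pairFiber (hab : a ≠ b) (hg : g ∈ Fintype.piFinset P) :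
    (pairFiber P a b g).image (fun f => (f a, f b)) = P a ×ˢ P b := by
  ext ⟨x, y⟩
  simp only [mem_image, mem_product]
  constructor
  · rintro ⟨f, hf, hfxy⟩
    cases hfxy
    exact ⟨(mem_pairFiber.1 hf).1 a, (mem_pairFiber.1 hf).1 b⟩
  · rintro ⟨hx, hy⟩
    have hgg : g ∈ pairFiber P a b g := mem_filter.2 ⟨hg, rfl⟩
    exact ⟨_, update_mem_pairFiber (update_mem_pairFiber hgg (.inl rfl) hx) (.inr rfl) hy,
      by simp [Function.update_of_ne hab]⟩

theorem IsRegularPair.abs_sum_filter_sub_density_le {G : SimpleGraph V} {ε : ℝ} (hab : a ≠ b)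
    (hreg : IsRegularPair G (P a) (P b) ε 1) {S : Finset (ι × ι)}
    (hS : ∀ s ∈ S, s(s.1, s.2) ≠ s(a, b)) :
    |∑ f ∈ Fintype.piFinset P with ∀ s ∈ S, G.Adj (f s.1) (f s.2),
        ((if G.Adj (f a) (f b) then 1 else 0) - density G (P a) (P b))|
      ≤ ε * #(Fintype.piFinset P) := by
  rw [sum_filter]
  refine abs_sum_le_of_forall_abs_sum_fiber_le _ ({a, b}ᶜ : Set ι).domRestrict _ _ fun g hg => ?_
  rw [← pairFiber, ← sum_filter,
    ← sum_image (injOn_pairFiber.mono (coe_subset.2 (filter_subset _ _)))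
      (f := fun p => (if G.Adj p.1 p.2 then 1 else 0) - density G (P a) (P b)),
    ← card_image_of_injOn injOn_pairFiber, image_pairFiber hab hg, card_product, Nat.cast_mul,
    ← mul_assoc]
  refine hreg.abs_sum_sub_density_le
    (image_pairFiber hab hg ▸ image_subset_image (filter_subset _ _)) ?_
  simp only [mem_image, mem_filter]
  rintro _ ⟨f, ⟨hfT, hf⟩, rfl⟩ _ ⟨f', ⟨hf'T, hf'⟩, rfl⟩
  have hff' := (mem_pairFiber.1 hfT).2.trans (mem_pairFiber.1 hf'T).2.symm
  exact ⟨Function.update f b (f' b),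
    ⟨update_mem_pairFiber hfT (.inr rfl) ((mem_pairFiber.1 hf'T).1 b),
      forall_adj_update_of_eqOn_compl_pair hS hff' hf hf'⟩,
    by simp [Function.update_of_ne hab]⟩

end PartiteMaps

section Counting

variable {ι V : Type} [Fintype ι] [DecidableEq ι] {G : SimpleGraph V} {P : ι → Finset V}

theorem abs_card_filter_adj_sub_le {ε : ℝ} (S : Finset (ι × ι))
    (hne : ∀ s ∈ S, s.1 ≠ s.2) (hreg : ∀ s ∈ S, IsRegularPair G (P s.1) (P s.2) ε 1)
    (hinj : Set.InjOn (fun s : ι × ι => s(s.1, s.2)) S) :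
    |(#{f ∈ Fintype.piFinset P | ∀ s ∈ S, G.Adj (f s.1) (f s.2)} : ℝ) -
        #(Fintype.piFinset P) * ∏ s ∈ S, density G (P s.1) (P s.2)|
      ≤ #S * ε * #(Fintype.piFinset P) := by
  induction S using Finset.induction_on with
  | empty => simp
  | @insert e S heS ih =>
    set D : ℝ := (#(Fintype.piFinset P) : ℝ)
    set d := density G (P e.1) (P e.2)
    set N := (#{f ∈ Fintype.piFinset P | ∀ s ∈ S, G.Adj (f s.1) (f s.2)} : ℝ)
    have hmem := mem_insert_self e S
    have hS : ∀ s ∈ S, s(s.1, s.2) ≠ s(e.1, e.2) := fun s hs h =>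
      heS (hinj (mem_insert_of_mem hs) hmem h ▸ hs)
    have hstep := (hreg e hmem).abs_sum_filter_sub_density_le (hne e hmem) hS
    rw [sum_sub_distrib, sum_boole, filter_filter, sum_const, nsmul_eq_mul] at hstep
    have hIH := ih (fun s hs => hne s (mem_insert_of_mem hs))
      (fun s hs => hreg s (mem_insert_of_mem hs)) (hinj.mono (by simp))
    have hd₀ := density_nonneg G (P e.1) (P e.2)
    have hd₁ := density_le_one G (P e.1) (P e.2)
    set Q := ∏ s ∈ S, density G (P s.1) (P s.2)
    simp only [forall_mem_insert, prod_insert heS, card_insert_of_notMem heS,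
      and_comm (a := G.Adj _ _)]
    rw [show ∀ x : ℝ, x - D * (d * Q) = (x - N * d) + d * (N - D * Q) from fun _ => by ring]
    calc _ ≤ ε * D + 1 * (#S * ε * D) := by
          refine (abs_add_le _ _).trans (add_le_add hstep ?_)
          rw [abs_mul, abs_of_nonneg hd₀]
          exact mul_le_mul hd₁ hIH (abs_nonneg _) zero_le_one
      _ = _ := by push_cast; ring

end Counting

section EdgePairs

variable {k : ℕ} (H : SimpleGraph (Fin k))

theorem adj_of_mem_hPairs {s : Fin k × Fin k} (hs : s ∈ hPairs H) : H.Adj s.1 s.2 :=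
  (mem_filter.1 hs).2.1

theorem fst_lt_snd_of_mem_hPairs {s : Fin k × Fin k} (hs : s ∈ hPairs H) : s.1 < s.2 :=
  (mem_filter.1 hs).2.2

theorem injOn_sym2_hPairs : Set.InjOn (fun s : Fin k × Fin k => s(s.1, s.2)) (hPairs H) := by
  intro s hs t ht hst
  rcases Sym2.eq_iff.1 hst with ⟨h₁, h₂⟩ | ⟨h₁, h₂⟩
  · exact Prod.ext h₁ h₂
  · have := fst_lt_snd_of_mem_hPairs H hs
    have := fst_lt_snd_of_mem_hPairs H ht
    omega

theorem forall_mem_hPairs_iff {R : Fin k → Fin k → Prop} (hR : ∀ i j, R i j → R j i) :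
    (∀ s ∈ hPairs H, R s.1 s.2) ↔ ∀ i j, H.Adj i j → R i j := by
  refine ⟨fun h i j hij => ?_, fun h s hs => h _ _ (adj_of_mem_hPairs H hs)⟩
  rcases lt_trichotomy i j with hlt | rfl | hgt
  · exact h (i, j) (by simp [hPairs, hij, hlt])
  · exact absurd hij H.irrefl
  · exact hR _ _ (h (j, i) (by simp [hPairs, hij.symm, hgt]))

theorem canonicalCount_eq_card_filter {W : Type} (G : SimpleGraph W) (P : Fin k → Finset W) :
    canonicalCount H G P = #{f ∈ Fintype.piFinset P | ∀ s ∈ hPairs H, G.Adj (f s.1) (f s.2)} := by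
  rw [canonicalCount, ← Set.ncard_coe_finset]
  congr 1
  ext f
  simp only [coe_filter, Fintype.mem_piFinset, Set.mem_ofPred_eq,
    forall_mem_hPairs_iff H (R := fun i j => G.Adj (f i) (f j)) fun _ _ h => h.symm]

end EdgePairs

/-- Dense counting lemma. -/
theorem dense_counting_lemma (k : ℕ) (H : SimpleGraph (Fin k)) (δ : ℝ) (hδ : 0 < δ) :
    ∃ (ε : ℝ) (n₀ : ℕ), 0 < ε ∧
      ∀ n : ℕ, n₀ ≤ n →
      ∀ (W : Type) [Fintype W], ∀ (G : SimpleGraph W) (P : Fin k → Finset W),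
        (∀ i j, i ≠ j → Disjoint (P i) (P j)) →
        (∀ v, ∃ i, v ∈ P i) →
        (∀ i, (P i).card = n) →
        (∀ i j, H.Adj i j → IsRegularPair G (P i) (P j) ε 1) →
        |(canonicalCount H G P : ℝ) -
            (n : ℝ) ^ k * ∏ ij ∈ hPairs H, density G (P ij.1) (P ij.2)|
          ≤ δ * (n : ℝ) ^ k := by
  refine ⟨δ / (#(hPairs H) + 1), 0, by positivity, fun n _ W _ G P _ _ hcard hreg => ?_⟩
  have hcount := abs_card_filter_adj_sub_le (G := G) (P := P) (hPairs H)
    (fun s hs => (fst_lt_snd_of_mem_hPairs H hs).ne)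
    (fun s hs => hreg _ _ (adj_of_mem_hPairs H hs)) (injOn_sym2_hPairs H)
  rw [← canonicalCount_eq_card_filter, Fintype.card_piFinset] at hcount
  simp only [hcard, prod_const, card_univ, Fintype.card_fin, Nat.cast_pow] at hcount
  have hε : (#(hPairs H) : ℝ) * (δ / (#(hPairs H) + 1)) ≤ δ := by
    rw [mul_div_assoc', div_le_iff₀ (by positivity)]
    linarith
  exact hcount.trans (by gcongr)
end

section
/- One-sided dense counting lemma for lower-regular graphs: For every graph H and every d > 0, there exist ε, ξ > 0 such that for every n and every G ∈ 𝒢_ℓ(H,n,d,ε), the number of canonical copies of H in G satisfies G(H) ≥ ξ n^{v(H)}. -/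
open Finset Filter
open scoped Classical

noncomputable def embCount {k : ℕ} {W : Type} [Fintype W] (H : SimpleGraph (Fin k))
    (G : SimpleGraph W) (S : Finset (Fin k)) (C : Fin k → Finset W) : Finset (Fin k → W) :=
  Finset.univ.filter fun f => (∀ i ∈ S, f i ∈ C i) ∧
    ∀ i ∈ S, ∀ j ∈ S, H.Adj i j → G.Adj (f i) (f j)

lemma embCount_update {k : ℕ} {W : Type} [Fintype W] (H : SimpleGraph (Fin k))
    (G : SimpleGraph W) (S : Finset (Fin k)) (C : Fin k → Finset W) {i : Fin k}
    (hi : i ∉ S) (f : Fin k → W) (v : W) :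
    Function.update f i v ∈ embCount H G S C ↔ f ∈ embCount H G S C := by
  have hne : ∀ j ∈ S, Function.update f i v j = f j := by
    intro j hj
    exact Function.update_of_ne (by rintro rfl; exact hi hj) _ _
  simp only [embCount, Finset.mem_filter, Finset.mem_univ, true_and]
  constructor
  · rintro ⟨h1, h2⟩
    refine ⟨fun j hj => hne j hj ▸ h1 j hj, fun a ha b hb hab => ?_⟩
    have := h2 a ha b hb hab
    rwa [hne a ha, hne b hb] at this
  · rintro ⟨h1, h2⟩
    refine ⟨fun j hj => (hne j hj).symm ▸ h1 j hj, fun a ha b hb hab => ?_⟩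
    rw [hne a ha, hne b hb]
    exact h2 a ha b hb hab

lemma embCount_card_fiber {k : ℕ} {W : Type} [Fintype W] (H : SimpleGraph (Fin k))
    (G : SimpleGraph W) (S : Finset (Fin k)) (C : Fin k → Finset W) {i : Fin k}
    (hi : i ∉ S) (v : W) :
    (embCount H G S C).card
      = Fintype.card W * ((embCount H G S C).filter fun f => f i = v).card := by
  rw [Finset.card_eq_sum_card_fiberwise (f := fun f => f i) (t := Finset.univ)
    (fun f _ => Finset.mem_univ _)]
  have heq : ∀ w : W, ((embCount H G S C).filter fun f => f i = w).card
      = ((embCount H G S C).filter fun f => f i = v).card := by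
    intro w
    refine Finset.card_bij (fun f _ => Function.update f i v) ?_ ?_ ?_
    · intro f hf
      rw [Finset.mem_filter] at hf ⊢
      exact ⟨(embCount_update H G S C hi f v).2 hf.1, Function.update_self _ _ _⟩
    · intro f hf g hg hfg
      rw [Finset.mem_filter] at hf hg
      funext j
      by_cases hj : j = i
      · subst hj; rw [hf.2, hg.2]
      · have := congrFun hfg j
        rwa [Function.update_of_ne hj, Function.update_of_ne hj] at this
    · intro g hg
      rw [Finset.mem_filter] at hg
      refine ⟨Function.update g i w, ?_, ?_⟩
      · rw [Finset.mem_filter]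
        exact ⟨(embCount_update H G S C hi g w).2 hg.1, Function.update_self _ _ _⟩
      · funext j
        by_cases hj : j = i
        · subst hj; simp [hg.2]
        · simp [Function.update_of_ne hj]
  calc ∑ w : W, ((embCount H G S C).filter fun f => f i = w).card
      = ∑ _w : W, ((embCount H G S C).filter fun f => f i = v).card := by
        exact Finset.sum_congr rfl (fun w _ => heq w)
    _ = Fintype.card W * _ := by rw [Finset.sum_const, smul_eq_mul, Finset.card_univ]

lemma edgesBetween_eq_sum {W : Type} (G : SimpleGraph W) (X Y : Finset W) :
    edgesBetween G X Y = ∑ x ∈ X, (Y.filter fun y => G.Adj x y).card := by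
  unfold edgesBetween
  rw [Finset.card_filter, Finset.sum_product]
  congr 1; ext x
  rw [Finset.card_filter]

-- bad set bound
lemma bad_small {W : Type} [Fintype W] (G : SimpleGraph W) (A B : Finset W)
    (ε d : ℝ) (hε : 0 < ε) (hd : 0 < d) (CA CB : Finset W) (hCA : CA ⊆ A) (hCB : CB ⊆ B)
    (hB : ε * B.card ≤ CB.card) (hApos : 0 < (A.card : ℝ)) (hBpos : 0 < (B.card : ℝ))
    (hreg : IsLowerRegularPair G A B ε d) :
    ((CA.filter fun v => ((CB.filter fun y => G.Adj v y).card : ℝ) < d * CB.card).card : ℝ)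
      < ε * A.card := by
  by_contra hcon
  push_neg at hcon
  set bad := CA.filter fun v => ((CB.filter fun y => G.Adj v y).card : ℝ) < d * CB.card with hbad
  have hsub : bad ⊆ A := (Finset.filter_subset _ _).trans hCA
  have hd2 := hreg bad hsub CB hCB hcon hB
  have hbadpos : 0 < (bad.card : ℝ) := lt_of_lt_of_le (by positivity) hcon
  have hbadne : bad.Nonempty := by
    rw [← Finset.card_pos]; exact_mod_cast hbadpos
  have hCBpos : 0 < (CB.card : ℝ) := lt_of_lt_of_le (by positivity) hB
  have hlt : (edgesBetween G bad CB : ℝ) < bad.card * (d * CB.card) := by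
    rw [edgesBetween_eq_sum]
    push_cast
    calc ∑ v ∈ bad, ((CB.filter fun y => G.Adj v y).card : ℝ)
        < ∑ _v ∈ bad, d * CB.card :=
          Finset.sum_lt_sum_of_nonempty hbadne (fun v hv => (Finset.mem_filter.1 hv).2)
      _ = bad.card * (d * CB.card) := by rw [Finset.sum_const, nsmul_eq_mul]
  have : density G bad CB < d := by
    unfold density
    rw [div_lt_iff₀ (by positivity)]
    calc (edgesBetween G bad CB : ℝ) < bad.card * (d * CB.card) := hlt
      _ = d * (bad.card * CB.card) := by ring
  linarith

lemma fiber_eq {k : ℕ} {W : Type} [Fintype W] (H : SimpleGraph (Fin k))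
    (G : SimpleGraph W) (S : Finset (Fin k)) (C : Fin k → Finset W) {i : Fin k}
    (hi : i ∈ S) {v : W} (hv : v ∈ C i) :
    (embCount H G (S.erase i)
        (fun j => if H.Adj i j then (C j).filter (fun y => G.Adj v y) else C j)).filter
        (fun f => f i = v)
      = (embCount H G S C).filter (fun f => f i = v) := by
  ext f
  simp only [Finset.mem_filter, embCount, Finset.mem_univ, true_and]
  constructor
  · rintro ⟨⟨h1, h2⟩, hfi⟩
    refine ⟨⟨?_, ?_⟩, hfi⟩
    · intro j hj
      by_cases hji : j = i
      · subst hji; rw [hfi]; exact hv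
      · have := h1 j (Finset.mem_erase.2 ⟨hji, hj⟩)
        by_cases hadj : H.Adj i j
        · rw [if_pos hadj] at this; exact (Finset.mem_filter.1 this).1
        · rwa [if_neg hadj] at this
    · intro a ha b hb hab
      by_cases hai : a = i
      · subst hai
        have hbi : b ≠ a := fun h => (H.irrefl (h ▸ hab)).elim
        have hm := h1 b (Finset.mem_erase.2 ⟨hbi, hb⟩)
        rw [if_pos hab] at hm
        rw [hfi]
        exact (Finset.mem_filter.1 hm).2
      · by_cases hbi : b = i
        · subst hbi
          have hm := h1 a (Finset.mem_erase.2 ⟨hai, ha⟩)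
          rw [if_pos hab.symm] at hm
          rw [hfi]
          exact ((Finset.mem_filter.1 hm).2).symm
        · exact h2 a (Finset.mem_erase.2 ⟨hai, ha⟩) b (Finset.mem_erase.2 ⟨hbi, hb⟩) hab
  · rintro ⟨⟨h1, h2⟩, hfi⟩
    refine ⟨⟨?_, ?_⟩, hfi⟩
    · intro j hj
      rw [Finset.mem_erase] at hj
      by_cases hadj : H.Adj i j
      · rw [if_pos hadj]
        refine Finset.mem_filter.2 ⟨h1 j hj.2, ?_⟩
        rw [← hfi]
        exact h2 i hi j hj.2 hadj
      · rw [if_neg hadj]; exact h1 j hj.2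
    · intro a ha b hb hab
      exact h2 a (Finset.mem_of_mem_erase ha) b (Finset.mem_of_mem_erase hb) hab

lemma key {k : ℕ} {W : Type} [Fintype W] (H : SimpleGraph (Fin k)) (G : SimpleGraph W)
    (P : Fin k → Finset W) (n : ℕ) (d : ℝ) (hd : 0 < d) (hd1 : d ≤ 1) (hn : 0 < n)
    (hP : ∀ i, (P i).card = n)
    (hreg : ∀ i j, H.Adj i j → IsLowerRegularPair G (P i) (P j) (d^k/((k:ℝ)+1)) d) :
    ∀ m : ℕ, ∀ S : Finset (Fin k), S.card = m → ∀ C : Fin k → Finset W,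
      (∀ i ∈ S, C i ⊆ P i) → (∀ i ∈ S, d^(k - m) * (n:ℝ) ≤ ((C i).card : ℝ)) →
      (d^k/((k:ℝ)+1) * n)^m * (Fintype.card W : ℝ)^(k - m) ≤ ((embCount H G S C).card : ℝ) := by
  intro m
  induction m with
  | zero =>
    intro S hS C _ _
    have hSe : S = ∅ := Finset.card_eq_zero.1 hS
    subst hSe
    have : embCount H G ∅ C = Finset.univ := by
      apply Finset.filter_true_of_mem
      intro f _
      exact ⟨fun i hi => absurd hi (Finset.notMem_empty i),
             fun i hi => absurd hi (Finset.notMem_empty i)⟩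
    rw [this, Finset.card_univ, Fintype.card_fun, Fintype.card_fin]
    simp
  | succ m IH =>
    intro S hS C hC1 hC2
    set ε := d^k/((k:ℝ)+1) with hεdef
    have hε : 0 < ε := by positivity
    obtain ⟨i, hi⟩ : S.Nonempty := Finset.card_pos.1 (hS ▸ m.succ_pos)
    have hS' : (S.erase i).card = m := by rw [Finset.card_erase_of_mem hi, hS]; rfl
    have hmk : m + 1 ≤ k := by
      have := Finset.card_le_univ S
      rw [hS] at this
      simpa using this
    have hnpos : (0:ℝ) < n := by exact_mod_cast hn
    have hεdk : ε ≤ d^k := by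
      rw [hεdef]
      apply div_le_self (by positivity)
      have : (0:ℝ) ≤ k := Nat.cast_nonneg k
      linarith
    have hpowle : d^k ≤ d^(k - (m+1)) :=
      pow_le_pow_of_le_one hd.le hd1 (Nat.sub_le k (m+1))
    have hCbig : ∀ j ∈ S, ε * n ≤ ((C j).card : ℝ) := by
      intro j hj
      refine le_trans ?_ (hC2 j hj)
      exact mul_le_mul_of_nonneg_right (hεdk.trans hpowle) hnpos.le
    -- bad sets
    have hbad : ∀ j ∈ S.erase i, H.Adj i j →
        (((C i).filter fun v =>
            (((C j).filter fun y => G.Adj v y).card : ℝ) < d * (C j).card).card : ℝ)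
          < ε * n := by
      intro j hj hadj
      have hPin : (0:ℝ) < ((P i).card : ℝ) := by rw [hP i]; exact hnpos
      have hPjn : (0:ℝ) < ((P j).card : ℝ) := by rw [hP j]; exact hnpos
      have := bad_small G (P i) (P j) ε d hε hd (C i) (C j) (hC1 i hi)
        (hC1 j (Finset.mem_of_mem_erase hj))
        (by rw [hP j]; exact hCbig j (Finset.mem_of_mem_erase hj)) hPin hPjn
        (hreg i j hadj)
      rwa [hP i] at this
    -- good set
    set good := (C i).filter (fun v => ∀ j ∈ S.erase i, H.Adj i j →
        d * ((C j).card:ℝ) ≤ (((C j).filter fun y => G.Adj v y).card : ℝ)) with hgooddef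
    have hgoodcard : ε * n ≤ (good.card : ℝ) := by
      have hsubset : C i ⊆ good ∪ ((S.erase i).filter (fun j => H.Adj i j)).biUnion
          (fun j => (C i).filter fun v =>
            (((C j).filter fun y => G.Adj v y).card : ℝ) < d * (C j).card) := by
        intro v hv
        by_cases hg : v ∈ good
        · exact Finset.mem_union_left _ hg
        · refine Finset.mem_union_right _ ?_
          rw [hgooddef, Finset.mem_filter] at hg
          push_neg at hg
          obtain ⟨j, hj, hadj, hlt⟩ := hg hv
          exact Finset.mem_biUnion.2 ⟨j, Finset.mem_filter.2 ⟨hj, hadj⟩,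
            Finset.mem_filter.2 ⟨hv, hlt⟩⟩
      have hcard1 : ((C i).card : ℝ) ≤ good.card +
          ∑ j ∈ (S.erase i).filter (fun j => H.Adj i j),
            (((C i).filter fun v =>
              (((C j).filter fun y => G.Adj v y).card : ℝ) < d * (C j).card).card : ℝ) := by
        have h1 := (Finset.card_le_card hsubset).trans (Finset.card_union_le _ _)
        have h2 := Finset.card_biUnion_le (s := (S.erase i).filter (fun j => H.Adj i j))
          (t := fun j => (C i).filter fun v =>
              (((C j).filter fun y => G.Adj v y).card : ℝ) < d * (C j).card)
        have := h1.trans (Nat.add_le_add_left h2 _)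
        exact_mod_cast this
      have hsumlt : ∑ j ∈ (S.erase i).filter (fun j => H.Adj i j),
            (((C i).filter fun v =>
              (((C j).filter fun y => G.Adj v y).card : ℝ) < d * (C j).card).card : ℝ)
          ≤ (k:ℝ) * (ε * n) := by
        have hcardle : (((S.erase i).filter (fun j => H.Adj i j)).card : ℝ) ≤ (k:ℝ) := by
          have := Finset.card_le_univ ((S.erase i).filter (fun j => H.Adj i j))
          simp only [Finset.card_univ, Fintype.card_fin] at this
          exact_mod_cast this
        calc ∑ j ∈ (S.erase i).filter (fun j => H.Adj i j), _
            ≤ ∑ j ∈ (S.erase i).filter (fun j => H.Adj i j), (ε * n) :=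
              Finset.sum_le_sum (fun j hj => (hbad j (Finset.mem_filter.1 hj).1
                (Finset.mem_filter.1 hj).2).le)
          _ = (((S.erase i).filter (fun j => H.Adj i j)).card : ℝ) * (ε * n) := by
              rw [Finset.sum_const, nsmul_eq_mul]
          _ ≤ (k:ℝ) * (ε * n) := by
              exact mul_le_mul_of_nonneg_right hcardle (by positivity)
      have hCi : ((k:ℝ)+1) * (ε * n) ≤ ((C i).card : ℝ) := by
        have h3 : ((k:ℝ)+1) * ε = d^k := by
          rw [hεdef]; field_simp
        have h4 : d^k * n ≤ ((C i).card : ℝ) :=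
          le_trans (mul_le_mul_of_nonneg_right hpowle hnpos.le) (hC2 i hi)
        calc ((k:ℝ)+1) * (ε * n) = (((k:ℝ)+1) * ε) * n := by ring
          _ = d^k * n := by rw [h3]
          _ ≤ _ := h4
      linarith
    -- recursion
    have hrec : ∀ v ∈ good, (ε * n)^m * (Fintype.card W : ℝ)^(k - m)
        ≤ ((embCount H G (S.erase i)
            (fun j => if H.Adj i j then (C j).filter (fun y => G.Adj v y) else C j)).card : ℝ) := by
      intro v hv
      rw [hgooddef, Finset.mem_filter] at hv
      apply IH (S.erase i) hS'
      · intro j hj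
        by_cases hadj : H.Adj i j
        · rw [if_pos hadj]
          exact (Finset.filter_subset _ _).trans (hC1 j (Finset.mem_of_mem_erase hj))
        · rw [if_neg hadj]
          exact hC1 j (Finset.mem_of_mem_erase hj)
      · intro j hj
        by_cases hadj : H.Adj i j
        · rw [if_pos hadj]
          have h5 := hv.2 j hj hadj
          have h6 : d^(k-m) * n = d * (d^(k-(m+1)) * n) := by
            have : k - m = (k - (m+1)) + 1 := by omega
            rw [this, pow_succ]; ring
          rw [h6]
          calc d * (d^(k-(m+1)) * n) ≤ d * ((C j).card : ℝ) :=
              mul_le_mul_of_nonneg_left (hC2 j (Finset.mem_of_mem_erase hj)) hd.le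
            _ ≤ _ := h5
        · rw [if_neg hadj]
          refine le_trans ?_ (hC2 j (Finset.mem_of_mem_erase hj))
          apply mul_le_mul_of_nonneg_right _ hnpos.le
          exact pow_le_pow_of_le_one hd.le hd1 (by omega)
    -- fibers
    have hfib : ∀ v ∈ good, ((embCount H G (S.erase i)
            (fun j => if H.Adj i j then (C j).filter (fun y => G.Adj v y) else C j)).card : ℝ)
        = (Fintype.card W : ℝ) * (((embCount H G S C).filter fun f => f i = v).card : ℝ) := by
      intro v hv
      rw [hgooddef, Finset.mem_filter] at hv
      rw [embCount_card_fiber H G (S.erase i) _ (Finset.notMem_erase i S) v,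
        fiber_eq H G S C hi hv.1]
      push_cast
      ring
    have hsum : (∑ v ∈ good, (((embCount H G S C).filter fun f => f i = v).card))
        ≤ (embCount H G S C).card := by
      rw [Finset.card_eq_sum_card_fiberwise (f := fun f => f i) (t := Finset.univ)
        (fun f _ => Finset.mem_univ _)]
      exact Finset.sum_le_sum_of_subset (Finset.subset_univ good)
    have hWpos : (0:ℝ) < (Fintype.card W : ℝ) := by
      have hCipos : (0:ℝ) < ((C i).card : ℝ) :=
        lt_of_lt_of_le (by positivity) (hCbig i hi)
      have hCine : (C i).Nonempty := by
        rw [← Finset.card_pos]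
        exact_mod_cast hCipos
      obtain ⟨w, _⟩ := hCine
      have : 0 < Fintype.card W := Fintype.card_pos_iff.2 ⟨w⟩
      exact_mod_cast this
    have key1 : (ε*n)^(m+1) * (Fintype.card W : ℝ)^(k-(m+1)) * (Fintype.card W : ℝ)
        ≤ ((embCount H G S C).card : ℝ) * (Fintype.card W : ℝ) := by
      have hkm : k - m = (k-(m+1)) + 1 := by
        have h1 : 1 ≤ k - m := Nat.le_sub_of_add_le (by rwa [Nat.add_comm])
        rw [show k - (m+1) = k - m - 1 from by rw [Nat.sub_sub], Nat.sub_add_cancel h1]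
      calc (ε*n)^(m+1) * (Fintype.card W : ℝ)^(k-(m+1)) * (Fintype.card W : ℝ)
          = (ε*n) * ((ε*n)^m * (Fintype.card W : ℝ)^(k-m)) := by
            rw [hkm, pow_succ, pow_succ]; ring
        _ ≤ (good.card : ℝ) * ((ε*n)^m * (Fintype.card W : ℝ)^(k-m)) :=
            mul_le_mul_of_nonneg_right hgoodcard (by positivity)
        _ ≤ ∑ v ∈ good, ((embCount H G (S.erase i)
            (fun j => if H.Adj i j then (C j).filter (fun y => G.Adj v y) else C j)).card : ℝ) := by
            have := Finset.card_nsmul_le_sum good _ _ hrec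
            rwa [nsmul_eq_mul] at this
        _ = ∑ v ∈ good, (Fintype.card W : ℝ) *
              (((embCount H G S C).filter fun f => f i = v).card : ℝ) :=
            Finset.sum_congr rfl hfib
        _ = (Fintype.card W : ℝ) *
              ∑ v ∈ good, (((embCount H G S C).filter fun f => f i = v).card : ℝ) := by
            rw [Finset.mul_sum]
        _ ≤ (Fintype.card W : ℝ) * ((embCount H G S C).card : ℝ) := by
            refine mul_le_mul_of_nonneg_left ?_ hWpos.le
            exact_mod_cast hsum
        _ = ((embCount H G S C).card : ℝ) * (Fintype.card W : ℝ) := by ring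
    exact le_of_mul_le_mul_right key1 hWpos

lemma canonicalCount_eq {k : ℕ} {W : Type} [Fintype W] (H : SimpleGraph (Fin k))
    (G : SimpleGraph W) (P : Fin k → Finset W) :
    canonicalCount H G P = (embCount H G Finset.univ P).card := by
  unfold canonicalCount embCount
  rw [← Set.ncard_coe_finset]
  congr 1
  ext f
  simp

lemma embCount_k0 {W : Type} [Fintype W] (H : SimpleGraph (Fin 0)) (G : SimpleGraph W)
    (C : Fin 0 → Finset W) : (embCount H G Finset.univ C).card = 1 := by
  have h : embCount H G Finset.univ C = Finset.univ := by
    apply Finset.filter_true_of_mem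
    intro f _
    exact ⟨fun i _ => i.elim0, fun i _ => i.elim0⟩
  rw [h, Finset.card_univ, Fintype.card_fun]
  simp


/-- One-sided dense counting lemma for lower-regular graphs. -/
theorem one_sided_dense_counting (k : ℕ) (H : SimpleGraph (Fin k)) (d : ℝ) (hd : 0 < d) :
    ∃ ε ξ : ℝ, 0 < ε ∧ 0 < ξ ∧
      ∀ (n : ℕ) (W : Type) [Fintype W],
      ∀ (G : SimpleGraph W) (P : Fin k → Finset W),
        InGl H G P n d ε →
        ξ * (n : ℝ) ^ k ≤ (canonicalCount H G P : ℝ) := by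
  have hd'0 : 0 < min d 1 := lt_min hd one_pos
  have hd'1 : min d 1 ≤ 1 := min_le_right d 1
  refine ⟨(min d 1)^k/((k:ℝ)+1), ((min d 1)^k/((k:ℝ)+1))^k, by positivity, by positivity, ?_⟩
  intro n W _ G P hG
  obtain ⟨hdisj, hcard, hcover, hedge, hreg⟩ := hG
  rw [canonicalCount_eq]
  rcases Nat.eq_zero_or_pos k with rfl | hk
  · rw [embCount_k0]
    simp
  · rcases Nat.eq_zero_or_pos n with rfl | hn
    · rw [Nat.cast_zero, zero_pow hk.ne', mul_zero]
      positivity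
    · have hreg' : ∀ i j, H.Adj i j →
          IsLowerRegularPair G (P i) (P j) ((min d 1)^k/((k:ℝ)+1)) (min d 1) :=
        fun i j hij A' hA B' hB h1 h2 =>
          le_trans (min_le_left d 1) (hreg i j hij A' hA B' hB h1 h2)
      have hkey := key H G P n (min d 1) hd'0 hd'1 hn hcard hreg' k Finset.univ
        (by simp) P (fun i _ => subset_rfl)
        (fun i _ => by rw [hcard i, Nat.sub_self, pow_zero, one_mul])
      rw [Nat.sub_self, pow_zero, mul_one, mul_pow] at hkey
      exact hkey
end
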